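/- Let Δ be a simplicial complex and let 𝒞 be an ordered proper vertex k-colouring of Δ. Let Q_k be the poset on the variables {x_1,…,x_k,y_1,…,y_k} of R = K[x_1,…,x_k,y_1,…,y_k] whose only relations are x_i < y_i for 1 ≤ i ≤ k. Then the uniform face ideal I(Δ, 𝒞) is Q_k-Borel if and only if 𝒞 is a nested colouring endowed with the nesting order. -/

import Mathlib

open MvPolynomial

/-- A simplicial complex on a vertex type `V`: a collection of finite subsets (faces)
containing the empty set and closed under taking subsets. -/
structure SimpComplex (V : Type) where
  faces : Set (Finset V)
  empty_mem : ∅ ∈ faces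
  down_closed : ∀ {σ τ : Finset V}, σ ∈ faces → τ ⊆ σ → τ ∈ faces

namespace SimpComplex

variable {V : Type}

/-- `A` is an independent set of `Δ`: no two distinct members lie in a common face. -/
def IsIndep (Δ : SimpComplex V) (A : Set V) : Prop :=
  ∀ u ∈ A, ∀ v ∈ A, u ≠ v → ∀ σ ∈ Δ.faces, ¬(u ∈ σ ∧ v ∈ σ)

/-- The link of a vertex `v` in `Δ`. -/
def link [DecidableEq V] (Δ : SimpComplex V) (v : V) : Set (Finset V) :=
  {τ | τ ∈ Δ.faces ∧ v ∉ τ ∧ insert v τ ∈ Δ.faces}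

end SimpComplex

/-- A family of finsets indexed by `Fin k` is a partition of the vertex set. -/
def IsPartition {V : Type} {k : ℕ} (C : Fin k → Finset V) : Prop :=
  ∀ v : V, ∃! i, v ∈ C i

/-- A proper vertex `k`-colouring of a simplicial complex: a partition into independent sets. -/
def IsProperColouring {V : Type} {k : ℕ} (Δ : SimpComplex V) (C : Fin k → Finset V) : Prop :=
  IsPartition C ∧ ∀ i, Δ.IsIndep (C i : Set V)

/-- An ordered proper vertex `k`-colouring, given by a duplicate-free list (recording the
linear order) for each colour class; the classes partition the vertices and are independent. -/
def IsOrderedColouring {V : Type} {k : ℕ} (Δ : SimpComplex V) (C : Fin k → List V) : Prop :=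
  (∀ i, (C i).Nodup) ∧ (∀ v : V, ∃! i, v ∈ C i) ∧ (∀ i, Δ.IsIndep {v | v ∈ C i})

/-- The given linear orders on the colour classes are nesting orders: within a class,
if `v` comes before `u` then `link(u) ⊆ link(v)`.  (Thus the colouring is nested and is
endowed with the nesting order.) -/
def IsNestingOrdered {V : Type} [DecidableEq V] {k : ℕ} (Δ : SimpComplex V)
    (C : Fin k → List V) : Prop :=
  ∀ i, (C i).Pairwise (fun v u => Δ.link u ⊆ Δ.link v)

/-- The index vector of a set `σ` with respect to the ordered colouring `C`:
`eVec C σ i = j` iff the (unique) element of `σ ∩ C i` is the `j`-th element of the list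
`C i` (counting from 1), and `0` if `σ ∩ C i = ∅`. -/
def eVec {V : Type} [DecidableEq V] {k : ℕ} (C : Fin k → List V) (σ : Finset V)
    (i : Fin k) : ℕ :=
  if (C i).any (fun v => decide (v ∈ σ)) then
    (C i).findIdx (fun v => decide (v ∈ σ)) + 1
  else 0

/-- The uniform monomial of a face `σ`:  `∏ i, x_i ^ (#C_i - e_i(σ)) * y_i ^ (e_i(σ))`,
where `x_i = X (Sum.inl i)` and `y_i = X (Sum.inr i)`. -/
noncomputable def uniformMonomial (K : Type) [Field K] {V : Type} [DecidableEq V] {k : ℕ}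
    (C : Fin k → List V) (σ : Finset V) : MvPolynomial (Fin k ⊕ Fin k) K :=
  ∏ i : Fin k, (X (Sum.inl i) ^ ((C i).length - eVec C σ i) * X (Sum.inr i) ^ eVec C σ i)

/-- The uniform face ideal of `Δ` with respect to the ordered colouring `C`. -/
noncomputable def uniformFaceIdeal (K : Type) [Field K] {V : Type} [DecidableEq V] {k : ℕ}
    (Δ : SimpComplex V) (C : Fin k → List V) : Ideal (MvPolynomial (Fin k ⊕ Fin k) K) :=
  Ideal.span {m | ∃ σ ∈ Δ.faces, m = uniformMonomial K C σ}

/-- A monomial ideal of `K[x_1,…,x_k,y_1,…,y_k]` is `Q_k`-Borel, where `Q_k` is the poset on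
the variables whose only relations are `x_i < y_i`:  for every monomial `m ∈ I` with
`y_i ∣ m`, the monomial `x_i·m/y_i` lies in `I`. -/
def IsQkBorel {k : ℕ} {K : Type} [Field K]
    (I : Ideal (MvPolynomial (Fin k ⊕ Fin k) K)) : Prop :=
  ∀ a : (Fin k ⊕ Fin k) →₀ ℕ, MvPolynomial.monomial a (1 : K) ∈ I →
    ∀ i : Fin k, a (Sum.inr i) ≠ 0 →
      MvPolynomial.monomial
        (a - Finsupp.single (Sum.inr i) 1 + Finsupp.single (Sum.inl i) 1) (1 : K) ∈ I

/-!
The uniform monomial of a face `σ` is `x ^ (#C - e(σ)) * y ^ e(σ)`. In each colour its `x_i`- and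
`y_i`-degrees add up to `#C_i`, so one uniform monomial divides another only if they coincide;
since a monomial lies in `I(Δ, 𝒞)` iff some uniform monomial divides it, `I(Δ, 𝒞)` is
`Q_k`-Borel iff for every face `σ` and colour `i` some face has the index vector `e(σ)` with
`e_i` lowered by one.

For nesting orders such a face is obtained from `σ` by replacing its vertex `v_{i,j}` with
`v_{i,j-1}` (or deleting it when `j = 1`), because `σ \ {v_{i,j}}` lies in
`link(v_{i,j}) ⊆ link(v_{i,j-1})`. Conversely, for `p < q` and `τ ∈ link(v_{i,q})`, repeated
Borel moves from the face `τ ∪ {v_{i,q}}` produce a face `ρ` with the same index vector except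
`e_i(ρ) = p + 1`; this `ρ` contains `τ ∪ {v_{i,p}}`, so `τ ∈ link(v_{i,p})`.
-/

section UniformFaceIdeal

open Finset

variable {V : Type} {k : ℕ}

noncomputable def uniformExponent (C : Fin k → List V) (e : Fin k → ℕ) :
    (Fin k ⊕ Fin k) →₀ ℕ :=
  Finsupp.equivFunOnFinite.symm (Sum.elim (fun i => (C i).length - e i) e)

@[simp] lemma uniformExponent_inl (C : Fin k → List V) (e : Fin k → ℕ) (i : Fin k) :
    uniformExponent C e (Sum.inl i) = (C i).length - e i := rfl

@[simp] lemma uniformExponent_inr (C : Fin k → List V) (e : Fin k → ℕ) (i : Fin k) :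
    uniformExponent C e (Sum.inr i) = e i := rfl

lemma eq_of_uniformExponent_le {C : Fin k → List V} {e e' : Fin k → ℕ}
    (he' : ∀ i, e' i ≤ (C i).length) (h : uniformExponent C e ≤ uniformExponent C e') :
    e = e' := by
  funext i
  have hx := Finsupp.le_def.1 h (Sum.inl i)
  have hy := Finsupp.le_def.1 h (Sum.inr i)
  simp only [uniformExponent_inl, uniformExponent_inr] at hx hy
  have := he' i
  omega

lemma uniformExponent_shift {C : Fin k → List V} {e : Fin k → ℕ} {i : Fin k} {t : ℕ}
    (ht : t ≤ e i) (hi : e i ≤ (C i).length) :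
    uniformExponent C e - Finsupp.single (Sum.inr i) t + Finsupp.single (Sum.inl i) t =
      uniformExponent C (Function.update e i (e i - t)) := by
  ext (j | j) <;> rcases eq_or_ne j i with rfl | hj <;> simp [*, tsub_tsub_assoc hi ht]

lemma uniformExponent_update_pred_le {C : Fin k → List V} {e : Fin k → ℕ} {i : Fin k}
    (hi : e i ≤ (C i).length) :
    uniformExponent C (Function.update e i (e i - 1)) ≤
      uniformExponent C e - Finsupp.single (Sum.inr i) 1 + Finsupp.single (Sum.inl i) 1 := by
  refine Finsupp.le_def.2 fun w => ?_
  rcases w with j | j <;> rcases eq_or_ne j i with rfl | hj <;> simp [*]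
  omega

lemma IsQkBorel.monomial_shift_mem {K : Type} [Field K]
    {I : Ideal (MvPolynomial (Fin k ⊕ Fin k) K)} (hI : IsQkBorel I)
    {a : (Fin k ⊕ Fin k) →₀ ℕ} (ha : monomial a (1 : K) ∈ I) (i : Fin k) {t : ℕ}
    (ht : t ≤ a (Sum.inr i)) :
    monomial (a - Finsupp.single (Sum.inr i) t + Finsupp.single (Sum.inl i) t) (1 : K) ∈ I := by
  induction t with
  | zero => simpa using ha
  | succ t ih =>
    convert hI _ (ih (by omega)) i (by simp; omega) using 3
    ext (j | j) <;> rcases eq_or_ne j i with rfl | hj <;> simp [*] <;> omega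

lemma eq_of_mem_face {Δ : SimpComplex V} {C : Fin k → List V} {i : Fin k}
    (hind : Δ.IsIndep {v | v ∈ C i}) {σ : Finset V} (hσ : σ ∈ Δ.faces) {u v : V}
    (hu : u ∈ C i) (hv : v ∈ C i) (huσ : u ∈ σ) (hvσ : v ∈ σ) : u = v :=
  by_contra fun hne => hind u hu v hv hne σ hσ ⟨huσ, hvσ⟩

variable [DecidableEq V]

lemma uniformMonomial_eq_monomial (K : Type) [Field K] (C : Fin k → List V) (σ : Finset V) :
    uniformMonomial K C σ = monomial (uniformExponent C (eVec C σ)) 1 := by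
  rw [monomial_eq, map_one, one_mul, Finsupp.prod_fintype _ _ fun _ => pow_zero _,
    Fintype.prod_sum_type, ← Finset.prod_mul_distrib]
  rfl

lemma monomial_mem_uniformFaceIdeal_iff (K : Type) [Field K] (Δ : SimpComplex V)
    (C : Fin k → List V) (a : (Fin k ⊕ Fin k) →₀ ℕ) :
    monomial a (1 : K) ∈ uniformFaceIdeal K Δ C ↔
      ∃ σ ∈ Δ.faces, uniformExponent C (eVec C σ) ≤ a := by
  classical
  have hgens : {m | ∃ σ ∈ Δ.faces, m = uniformMonomial K C σ} =
      (fun s => monomial s (1 : K)) '' ((fun σ => uniformExponent C (eVec C σ)) '' Δ.faces) := by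
    ext m
    simp [uniformMonomial_eq_monomial, eq_comm]
  rw [uniformFaceIdeal, hgens, mem_ideal_span_monomial_image, support_monomial,
    if_neg one_ne_zero]
  simp

lemma eVec_le_length (C : Fin k → List V) (σ : Finset V) (i : Fin k) :
    eVec C σ i ≤ (C i).length := by
  unfold eVec
  split_ifs with h
  · have := List.findIdx_lt_length_of_exists (List.any_eq_true.1 h)
    omega
  · exact Nat.zero_le _

lemma eVec_eq_zero {C : Fin k → List V} {σ : Finset V} {i : Fin k}
    (h : ∀ v ∈ C i, v ∉ σ) : eVec C σ i = 0 := by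
  unfold eVec
  rw [if_neg]
  simpa using h

lemma eVec_congr {C : Fin k → List V} {σ τ : Finset V} {i : Fin k}
    (h : ∀ v ∈ C i, v ∈ σ ↔ v ∈ τ) : eVec C σ i = eVec C τ i := by
  have hmap : (C i).map (fun v => decide (v ∈ σ)) = (C i).map (fun v => decide (v ∈ τ)) :=
    List.map_congr_left fun v hv => decide_eq_decide.2 (h v hv)
  have hany := congrArg (List.any · id) hmap
  have hidx := congrArg (List.findIdx id) hmap
  simp only [List.any_map, List.findIdx_map, Function.id_comp] at hany hidx
  unfold eVec
  rw [hany, hidx]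

lemma eVec_eq_idxOf_succ {C : Fin k → List V} {σ : Finset V} {i : Fin k} {v : V}
    (hv : v ∈ C i) (hvσ : v ∈ σ) (huniq : ∀ w ∈ C i, w ∈ σ → w = v) :
    eVec C σ i = (C i).idxOf v + 1 := by
  have hσv : ∀ w ∈ C i, w ∈ σ ↔ w ∈ ({v} : Finset V) := fun w hw =>
    ⟨fun h => mem_singleton.2 (huniq w hw h), fun h => mem_singleton.1 h ▸ hvσ⟩
  rw [eVec_congr hσv]
  unfold eVec
  rw [if_pos (List.any_eq_true.2 ⟨v, hv, by simp⟩)]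
  simp only [mem_singleton, List.idxOf]
  rfl

lemma mem_of_eVec_eq {C : Fin k → List V} {σ : Finset V} {i : Fin k} {v : V}
    (h : eVec C σ i = (C i).idxOf v + 1) : v ∈ σ := by
  unfold eVec at h
  split_ifs at h with hany
  have hlt := List.findIdx_lt_length_of_exists (List.any_eq_true.1 hany)
  have hidx : (C i).findIdx (fun w => decide (w ∈ σ)) = (C i).idxOf v := by omega
  have hmem := List.findIdx_getElem (w := hlt)
  simp only [hidx, List.getElem_idxOf] at hmem
  simpa using hmem

variable {Δ : SimpComplex V} {C : Fin k → List V}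

lemma eVec_face_eq_idxOf_succ {i : Fin k} (hind : Δ.IsIndep {v | v ∈ C i}) {σ : Finset V}
    (hσ : σ ∈ Δ.faces) {v : V} (hv : v ∈ C i) (hvσ : v ∈ σ) :
    eVec C σ i = (C i).idxOf v + 1 :=
  eVec_eq_idxOf_succ hv hvσ fun _ hw hwσ => eq_of_mem_face hind hσ hw hv hwσ hvσ

lemma exists_face_eVec_eq_update_pred (hC : IsOrderedColouring Δ C)
    (hnest : IsNestingOrdered Δ C) {σ : Finset V} (hσ : σ ∈ Δ.faces) (i : Fin k) :
    ∃ σ' ∈ Δ.faces, eVec C σ' = Function.update (eVec C σ) i (eVec C σ i - 1) := by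
  obtain ⟨hnd, hpart, hind⟩ := hC
  have hoff : ∀ σ' : Finset V, (∀ w ∉ C i, w ∈ σ' ↔ w ∈ σ) →
      ∀ l ≠ i, eVec C σ' l = eVec C σ l :=
    fun σ' h l hl => eVec_congr fun w hw => h w fun hwi => hl ((hpart w).unique hw hwi)
  rcases h : eVec C σ i with _ | j
  · exact ⟨σ, hσ, by simp [h]⟩
  have hj : j < (C i).length := by have := eVec_le_length C σ i; omega
  set v := (C i)[j]
  have hvC : v ∈ C i := List.getElem_mem _
  have hvσ : v ∈ σ := mem_of_eVec_eq (by rw [h, (hnd i).idxOf_getElem])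
  have hv_link : σ.erase v ∈ Δ.link v :=
    ⟨Δ.down_closed hσ (erase_subset _ _), notMem_erase _ _, by rwa [insert_erase hvσ]⟩
  rcases j with _ | j
  · refine ⟨σ.erase v, hv_link.1, Function.eq_update_iff.2 ⟨eVec_eq_zero ?_, hoff _ ?_⟩⟩
    · exact fun w hw hwσ => ne_of_mem_erase hwσ
        (eq_of_mem_face (hind i) hσ hw hvC (mem_of_mem_erase hwσ) hvσ)
    · intro w hw
      simp [ne_of_mem_of_not_mem hvC hw |>.symm]
  · set u := (C i)[j]
    have huC : u ∈ C i := List.getElem_mem _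
    have hu_link : σ.erase v ∈ Δ.link u :=
      List.pairwise_iff_getElem.1 (hnest i) j (j + 1) (by omega) hj (by omega) hv_link
    refine ⟨insert u (σ.erase v), hu_link.2.2, Function.eq_update_iff.2 ⟨?_, hoff _ ?_⟩⟩
    · rw [eVec_face_eq_idxOf_succ (hind i) hu_link.2.2 huC (mem_insert_self _ _),
        (hnd i).idxOf_getElem]
      rfl
    · intro w hw
      simp [ne_of_mem_of_not_mem hvC hw |>.symm, ne_of_mem_of_not_mem huC hw |>.symm]

lemma isQkBorel_uniformFaceIdeal (K : Type) [Field K] (hC : IsOrderedColouring Δ C)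
    (hnest : IsNestingOrdered Δ C) : IsQkBorel (uniformFaceIdeal K Δ C) := by
  intro a ha i _
  rw [monomial_mem_uniformFaceIdeal_iff] at ha ⊢
  obtain ⟨σ, hσ, hle⟩ := ha
  obtain ⟨σ', hσ', hσ'e⟩ := exists_face_eVec_eq_update_pred hC hnest hσ i
  refine ⟨σ', hσ', ?_⟩
  rw [hσ'e]
  exact (uniformExponent_update_pred_le (eVec_le_length C σ i)).trans
    (add_le_add (tsub_le_tsub_right hle _) le_rfl)

lemma exists_face_eVec_eq_update_of_isQkBorel (K : Type) [Field K]
    (hB : IsQkBorel (uniformFaceIdeal K Δ C)) {σ : Finset V} (hσ : σ ∈ Δ.faces) {i : Fin k}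
    {p : ℕ} (hp : p ≤ eVec C σ i) :
    ∃ ρ ∈ Δ.faces, eVec C ρ = Function.update (eVec C σ) i p := by
  have hσI : monomial (uniformExponent C (eVec C σ)) (1 : K) ∈ uniformFaceIdeal K Δ C := by
    rw [← uniformMonomial_eq_monomial]
    exact Ideal.subset_span ⟨σ, hσ, rfl⟩
  have hlen := eVec_le_length C σ
  have hshift := hB.monomial_shift_mem hσI i (t := eVec C σ i - p) (by simp)
  rw [uniformExponent_shift (Nat.sub_le _ _) (hlen i), Nat.sub_sub_self hp,
    monomial_mem_uniformFaceIdeal_iff] at hshift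
  obtain ⟨ρ, hρ, hle⟩ := hshift
  refine ⟨ρ, hρ, eq_of_uniformExponent_le (fun l => ?_) hle⟩
  rcases eq_or_ne l i with rfl | hl
  · simpa using hp.trans (hlen l)
  · simpa [hl] using hlen l

lemma link_getElem_subset_of_isQkBorel (K : Type) [Field K] (hC : IsOrderedColouring Δ C)
    (hB : IsQkBorel (uniformFaceIdeal K Δ C)) {i : Fin k} {p q : ℕ} (hpq : p < q)
    (hq : q < (C i).length) :
    Δ.link (C i)[q] ⊆ Δ.link (C i)[p] := by
  obtain ⟨hnd, hpart, hind⟩ := hC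
  rintro τ ⟨hτ, huτ, hσ⟩
  set u := (C i)[q]
  set v := (C i)[p]
  have hei : eVec C (insert u τ) i = q + 1 := by
    rw [eVec_face_eq_idxOf_succ (hind i) hσ (List.getElem_mem _) (mem_insert_self _ _),
      (hnd i).idxOf_getElem]
  obtain ⟨ρ, hρ, hρe⟩ :=
    exists_face_eVec_eq_update_of_isQkBorel K hB hσ (i := i) (p := p + 1) (by omega)
  have hvρ : v ∈ ρ :=
    mem_of_eVec_eq (by rw [hρe, Function.update_self, (hnd i).idxOf_getElem])
  have hτρ : τ ⊆ ρ := by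
    intro w hw
    obtain ⟨l, hwl, -⟩ := hpart w
    have hwσ : w ∈ insert u τ := mem_insert_of_mem hw
    have hli : l ≠ i := by
      rintro rfl
      obtain rfl :=
        eq_of_mem_face (hind l) hσ hwl (List.getElem_mem _) hwσ (mem_insert_self _ _)
      exact huτ hw
    exact mem_of_eVec_eq (by
      rw [hρe, Function.update_of_ne hli, eVec_face_eq_idxOf_succ (hind l) hσ hwl hwσ])
  refine ⟨hτ, fun hvτ => hpq.ne ?_, Δ.down_closed hρ (insert_subset hvρ hτρ)⟩
  exact (hnd i).getElem_inj_iff.1 (eq_of_mem_face (hind i) hσ (List.getElem_mem _)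
    (List.getElem_mem _) (mem_insert_of_mem hvτ) (mem_insert_self _ _))

lemma isNestingOrdered_of_isQkBorel (K : Type) [Field K] (hC : IsOrderedColouring Δ C)
    (hB : IsQkBorel (uniformFaceIdeal K Δ C)) : IsNestingOrdered Δ C := fun _ =>
  List.pairwise_iff_getElem.2 fun _ _ _ hq hpq =>
    link_getElem_subset_of_isQkBorel K hC hB hpq hq

end UniformFaceIdeal

/-- Theorem 5.2: the uniform face ideal `I(Δ,𝒞)` is `Q_k`-Borel iff the
ordered colouring `𝒞` is a nested colouring endowed with the nesting order. -/
theorem stmt7 {n k : ℕ} (K : Type) [Field K] (Δ : SimpComplex (Fin n))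
    (C : Fin k → List (Fin n)) (hC : IsOrderedColouring Δ C) :
    IsQkBorel (uniformFaceIdeal K Δ C) ↔ IsNestingOrdered Δ C :=
  ⟨isNestingOrdered_of_isQkBorel K hC, isQkBorel_uniformFaceIdeal K hC⟩
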